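/- Suppose Δ = 1 and h = 1 (so S has degree 2k² and we consider Hilb²(S)). If k ≥ 2, then there exists no numerical wall datum. If k = 1, then w = (a,b,c) is a numerical wall datum if and only if w = (1,−1,2); this unique wall corresponds to the Mukai flop between Hilb²(S) and the Beauville–Mukai system M(0,1,−1), so for k = 1 the movable cone of Hilb²(S) has exactly two chambers, and for k ≥ 2 it has only one chamber. (Proposition on the case Δ = h = 1.) -/

import Mathlib

/-- The Mukai pairing on the algebraic Mukai lattice ℤ³ of a K3 surface `S` with
`Pic(S) = ℤ·H`, `H² = 2Δk²`, identifying `(r, xH, s)` with `(r, x, s)`: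
`⟨(r,x,s),(r′,x′,s′)⟩ = 2Δk²xx′ − rs′ − r′s`. -/
def mukaiPair (Δ k : ℤ) (w w' : ℤ × ℤ × ℤ) : ℤ :=
  2 * Δ * k ^ 2 * w.2.1 * w'.2.1 - w.1 * w'.2.2 - w'.1 * w.2.2

/-- The Mukai vector `v = (1, 0, −Δh²)` of the Hilbert scheme of `Δh²+1` points. -/
def mukaiV (Δ h : ℤ) : ℤ × ℤ × ℤ := (1, 0, -(Δ * h ^ 2))

/-- The slope `Γ = −2Δk²b / (Δh²a + c)` associated to `w = (a,b,c)`. -/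
def wallGamma (Δ h k : ℤ) (w : ℤ × ℤ × ℤ) : ℚ :=
  ((-(2 * Δ * k ^ 2 * w.2.1) : ℤ) : ℚ) / ((Δ * h ^ 2 * w.1 + w.2.2 : ℤ) : ℚ)

/-- `w = (a,b,c) ∈ ℤ³` is a numerical wall datum (for the interior of the movable cone of
`Hilb^{Δh²+1}(S)`) if:
(W1) `Δh²a + c ≠ 0` and `Γ := −2Δk²b/(Δh²a + c)` satisfies `2k²/(h²+k²+1) ≤ Γ < k/h`;
(W2) `Γ·b + a ≥ 0` and `−Γ·b + 1 − a ≥ 0`;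
(W3) either `⟨w,w⟩ = −2` and `−Δh² ≤ ⟨w,v⟩ ≤ Δh²`, or `⟨w,w⟩ ≥ 0`, `2⟨w,w⟩ < Δh²` and
     `2⟨w,w⟩ + 1 ≤ ⟨w,v⟩ ≤ Δh²`;
(W4) `⟨w,v⟩² > 2Δh²·⟨w,w⟩`. -/
def IsWallDatum (Δ h k : ℤ) (w : ℤ × ℤ × ℤ) : Prop :=
  Δ * h ^ 2 * w.1 + w.2.2 ≠ 0 ∧
  (2 * (k : ℚ) ^ 2 / ((h : ℚ) ^ 2 + (k : ℚ) ^ 2 + 1) ≤ wallGamma Δ h k w ∧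
    wallGamma Δ h k w < (k : ℚ) / (h : ℚ)) ∧
  (0 ≤ wallGamma Δ h k w * (w.2.1 : ℚ) + (w.1 : ℚ) ∧
    0 ≤ -(wallGamma Δ h k w * (w.2.1 : ℚ)) + 1 - (w.1 : ℚ)) ∧
  ((mukaiPair Δ k w w = -2 ∧ -(Δ * h ^ 2) ≤ mukaiPair Δ k w (mukaiV Δ h) ∧
      mukaiPair Δ k w (mukaiV Δ h) ≤ Δ * h ^ 2) ∨
    (0 ≤ mukaiPair Δ k w w ∧ 2 * mukaiPair Δ k w w < Δ * h ^ 2 ∧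
      2 * mukaiPair Δ k w w + 1 ≤ mukaiPair Δ k w (mukaiV Δ h) ∧
      mukaiPair Δ k w (mukaiV Δ h) ≤ Δ * h ^ 2)) ∧
  (mukaiPair Δ k w (mukaiV Δ h)) ^ 2 > 2 * Δ * h ^ 2 * mukaiPair Δ k w w

/-! For `Δ = h = 1` and `w = (a, b, c)` put `m = kb`, `s = a + c`, `j = a - c`. Then
`2⟨w,w⟩ = 4m² - s² + j²`, so (W3) bounds `s² - 4m²` by `5`, while (W1) says
`0 < -2m/s < 1`, i.e. `ms < 0` and `2|m| < |s|`. For integers this forces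
`s² - 4m² ≥ 4|m| + 1 ≥ 5`, hence `|m| = 1`, `|s| = 3`, `|j| = 1`, and (W2) picks out `s = 3`,
`a = 1`, so `kb = -1`. -/

theorem mukaiPair_self (Δ k : ℤ) (w : ℤ × ℤ × ℤ) :
    mukaiPair Δ k w w = 2 * Δ * k ^ 2 * w.2.1 ^ 2 - 2 * w.1 * w.2.2 := by
  simp only [mukaiPair]
  ring

theorem mukaiPair_mukaiV (Δ h k : ℤ) (w : ℤ × ℤ × ℤ) :
    mukaiPair Δ k w (mukaiV Δ h) = Δ * h ^ 2 * w.1 - w.2.2 := by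
  simp only [mukaiPair, mukaiV]
  ring

theorem IsWallDatum.wallGamma_pos {Δ h k : ℤ} {w : ℤ × ℤ × ℤ} (hw : IsWallDatum Δ h k w)
    (hk : k ≠ 0) : 0 < wallGamma Δ h k w :=
  lt_of_lt_of_le (by positivity) hw.2.1.1

theorem wallGamma_one_one_mul_sq (k a b c : ℤ) (hs : a + c ≠ 0) :
    wallGamma 1 1 k (a, b, c) * ((a + c : ℤ) : ℚ) ^ 2 =
      ((-2 * k * (k * b * (a + c)) : ℤ) : ℚ) := by
  have hs' : ((a + c : ℤ) : ℚ) ≠ 0 := by exact_mod_cast hs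
  simp only [wallGamma, one_mul, one_pow] at hs' ⊢
  field_simp
  push_cast
  ring

theorem four_mul_sq_lt_sq_of_mul_neg {m s : ℤ} (hms : m * s < 0) (h : -2 * (m * s) < s ^ 2) :
    4 * m ^ 2 < s ^ 2 := by
  nlinarith [sq_nonneg (s + 2 * m), sq_nonneg (s - 2 * m)]

theorem sq_eq_one_and_sq_eq_nine_of_four_mul_sq_lt_sq {m s : ℤ} (hm : m ≠ 0)
    (hlt : 4 * m ^ 2 < s ^ 2) (hle : s ^ 2 - 4 * m ^ 2 ≤ 5) : m ^ 2 = 1 ∧ s ^ 2 = 9 := by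
  have hm1 : 1 ≤ |m| := Int.one_le_abs hm
  have hms : 2 * |m| + 1 ≤ |s| := by
    have : |2 * m| < |s| := sq_lt_sq.mp (by linear_combination hlt)
    rw [abs_mul, abs_two] at this
    omega
  have hsq : (2 * |m| + 1) ^ 2 ≤ s ^ 2 := by
    rw [← sq_abs s]
    exact pow_le_pow_left₀ (by positivity) hms 2
  have hm_eq : |m| = 1 := by nlinarith [sq_abs m]
  have hm2 : m ^ 2 = 1 := by rw [← sq_abs, hm_eq, one_pow]
  exact ⟨hm2, by nlinarith⟩

section OneOne

variable {k a b c : ℤ}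

theorem IsWallDatum.one_one_slope (hk : 0 < k) (hw : IsWallDatum 1 1 k (a, b, c)) :
    k * b * (a + c) < 0 ∧ 4 * (k * b) ^ 2 < (a + c) ^ 2 := by
  have hs : a + c ≠ 0 := by simpa using hw.1
  have hsq : (0 : ℚ) < ((a + c : ℤ) : ℚ) ^ 2 := by positivity
  have key := wallGamma_one_one_mul_sq k a b c hs
  have hpos : (0 : ℤ) < -2 * k * (k * b * (a + c)) := by
    exact_mod_cast key ▸ mul_pos (hw.wallGamma_pos hk.ne') hsq
  have hlt : -2 * k * (k * b * (a + c)) < k * (a + c) ^ 2 := by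
    have hΓ : wallGamma 1 1 k (a, b, c) < k := by simpa using hw.2.1.2
    exact_mod_cast key ▸ mul_lt_mul_of_pos_right hΓ hsq
  have hneg : k * b * (a + c) < 0 := by nlinarith
  exact ⟨hneg, four_mul_sq_lt_sq_of_mul_neg hneg (by nlinarith)⟩

/-- Condition (W2), cleared of the denominator `a + c`. -/
theorem IsWallDatum.one_one_bounds (hw : IsWallDatum 1 1 k (a, b, c)) :
    0 ≤ a * (a + c) ^ 2 - 2 * (k * b) ^ 2 * (a + c) ∧
      a * (a + c) ^ 2 - 2 * (k * b) ^ 2 * (a + c) ≤ (a + c) ^ 2 := by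
  have hs : a + c ≠ 0 := by simpa using hw.1
  have hsq : (0 : ℚ) < ((a + c : ℤ) : ℚ) ^ 2 := by positivity
  have key : (wallGamma 1 1 k (a, b, c) * b + a) * ((a + c : ℤ) : ℚ) ^ 2 =
      ((a * (a + c) ^ 2 - 2 * (k * b) ^ 2 * (a + c) : ℤ) : ℚ) := by
    rw [add_mul, mul_right_comm, wallGamma_one_one_mul_sq k a b c hs]
    push_cast
    ring
  obtain ⟨hlo, hhi⟩ := hw.2.2.1
  constructor
  · exact_mod_cast key ▸ mul_nonneg hlo hsq.le
  · have := mul_le_of_le_one_left hsq.le (show wallGamma 1 1 k (a, b, c) * b + a ≤ 1 by linarith)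
    exact_mod_cast key ▸ this

theorem IsWallDatum.one_one_sq_sub_le (hw : IsWallDatum 1 1 k (a, b, c)) :
    (a + c) ^ 2 - 4 * (k * b) ^ 2 ≤ 5 ∧ |a - c| ≤ 1 := by
  have hW3 := hw.2.2.2.1
  simp only [mukaiPair_self, mukaiPair_mukaiV, one_pow, mul_one, one_mul] at hW3
  have e : (a + c) ^ 2 - 4 * (k * b) ^ 2 = (a - c) ^ 2 - 2 * (2 * k ^ 2 * b ^ 2 - 2 * a * c) := by
    ring
  rcases hW3 with ⟨hq, hj⟩ | ⟨hq₀, hq₁, hj, hj'⟩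
  · have hj2 : (a - c) ^ 2 ≤ 1 := by nlinarith [abs_le.mpr hj]
    exact ⟨by linarith, abs_le.mpr hj⟩
  · have hq : 2 * k ^ 2 * b ^ 2 - 2 * a * c = 0 := by omega
    have hj1 : a - c = 1 := by omega
    exact ⟨by rw [e, hq, hj1]; norm_num, by rw [hj1]; norm_num⟩

theorem IsWallDatum.one_one_eq (hk : 0 < k) (hw : IsWallDatum 1 1 k (a, b, c)) :
    k = 1 ∧ (a, b, c) = (1, -1, 2) := by
  obtain ⟨hneg, hlt⟩ := hw.one_one_slope hk
  obtain ⟨hlo, hhi⟩ := hw.one_one_bounds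
  obtain ⟨hle, hj⟩ := hw.one_one_sq_sub_le
  have hm : k * b ≠ 0 := fun h => by simp [h] at hneg
  obtain ⟨hm2, hs2⟩ := sq_eq_one_and_sq_eq_nine_of_four_mul_sq_lt_sq hm hlt hle
  rw [hm2, hs2] at hlo hhi
  have hs : a + c = 3 ∨ a + c = -3 := sq_eq_sq_iff_eq_or_eq_neg.mp (by rw [hs2]; norm_num)
  rw [abs_le] at hj
  have hs3 : a + c = 3 := by omega
  have hkb : k * b = -1 := by rw [hs3] at hneg; nlinarith
  have hk1 : k = 1 ∧ b = -1 := by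
    rcases Int.eq_one_or_neg_one_of_mul_eq_neg_one' hkb with h | h <;> omega
  refine ⟨hk1.1, ?_⟩
  simp only [Prod.mk.injEq]
  omega

end OneOne

theorem isWallDatum_one_one_one : IsWallDatum 1 1 1 (1, -1, 2) := by
  norm_num [IsWallDatum, wallGamma, mukaiPair, mukaiV]

/-- Proposition on the case `Δ = h = 1`: for `k ≥ 2` there is no numerical wall datum
(the movable cone of `Hilb²(S)` has one chamber), and for `k = 1` the numerical wall data
are exactly `w = (1,−1,2)` (the Mukai flop to the Beauville–Mukai system `M(0,1,−1)`,
giving two chambers). -/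
theorem wall_data_delta_one_h_one (k : ℤ) (hk : 0 < k) :
    (2 ≤ k → ¬ ∃ w : ℤ × ℤ × ℤ, IsWallDatum 1 1 k w) ∧
    (k = 1 → ∀ w : ℤ × ℤ × ℤ, IsWallDatum 1 1 k w ↔ w = (1, -1, 2)) := by
  constructor
  · rintro hk2 ⟨⟨a, b, c⟩, hw⟩
    have := (hw.one_one_eq hk).1
    omega
  · rintro rfl ⟨a, b, c⟩
    exact ⟨fun hw => (hw.one_one_eq hk).2, fun h => h ▸ isWallDatum_one_one_one⟩
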